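/- arXiv:2109.07870 — 2 statements merged into one kernel-verified Lean document; each statement's English description precedes it below -/
import Mathlib

section
/- Let (M, J, g) be an almost Hermitian manifold with Chern connection ∇ and curvature R, let S ⊆ M be an embedded almost complex submanifold with induced Chern connection curvature R̂ and second fundamental form II. Then for any nonzero X ∈ TₚS, the holomorphic sectional curvatures satisfy H(X) = Ĥ(X) + 2|II(X, X)|²/|X|⁴. In particular Ĥ(X) ≤ H(X), with equality if and only if II(X, X) = 0. -/
/-!
Metric compatibility turns the difference between
`⟪∇_X ∇_Y Z, W⟫` and `⟪∇_X (∇_Y Z)ᵀ, W⟫` into `-⟪II(Y,Z), II(X,W)⟫` (Weingarten), which gives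
`R(X,Y,Z,W) = R̂(X,Y,Z,W) - ⟪II(X,W), II(Y,Z)⟫ + ⟪II(X,Z), II(Y,W)⟫`. For `Y = Z = JX`, `W = X`,
the compatibility of `∇` with `J`, the `J`-invariance of the tangent spaces and the vanishing torsion
in the `(X, JX)` plane give `II(X,JX) = II(JX,X) = J II(X,X)` and `II(JX,JX) = -II(X,X)`, so both
correction terms equal `‖II(X,X)‖²`.
-/

open Submodule
open scoped RealInnerProductSpace

section LinearAlgebra

variable {E : Type*} [NormedAddCommGroup E] [InnerProductSpace ℝ E]
  {K : Submodule ℝ E} [K.HasOrthogonalProjection]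

lemma inner_starProjection_left_of_mem {u : E} (hu : u ∈ K) (v : E) :
    ⟪K.starProjection v, u⟫ = ⟪v, u⟫ := by
  rw [inner_starProjection_left_eq_right, starProjection_eq_self_iff.mpr hu]

lemma inner_sub_starProjection_left_eq (v w : E) :
    ⟪v - K.starProjection v, w⟫ = ⟪v - K.starProjection v, w - K.starProjection w⟫ := by
  rw [inner_sub_right, starProjection_inner_eq_zero v _ (K.starProjection_apply_mem w), sub_zero]

lemma inner_map_left_eq_neg_of_sq_eq_neg {J : E →ₗ[ℝ] E} (hJ2 : ∀ v, J (J v) = -v)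
    (hJg : ∀ v w, ⟪J v, J w⟫ = ⟪v, w⟫) (v w : E) :
    ⟪J v, w⟫ = -⟪v, J w⟫ := by
  rw [← hJg, hJ2, inner_neg_left]

lemma starProjection_map_of_skew {J : E →ₗ[ℝ] E} (hJ : ∀ v w, ⟪J v, w⟫ = -⟪v, J w⟫)
    (hJK : ∀ v ∈ K, J v ∈ K) (v : E) :
    K.starProjection (J v) = J (K.starProjection v) := by
  refine eq_starProjection_of_mem_of_inner_eq_zero (hJK _ (K.starProjection_apply_mem v))
    fun w hw => ?_
  rw [← map_sub, hJ, starProjection_inner_eq_zero v _ (hJK w hw), neg_zero]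

end LinearAlgebra

section Submanifold

variable {M E : Type*} [NormedAddCommGroup E] [InnerProductSpace ℝ E]
  (T : M → Submodule ℝ E) [∀ p, (T p).HasOrthogonalProjection]

def IsMetricConnection (D : (M → E) → (M → ℝ) → (M → ℝ)) (Cov : (M → E) → (M → E) → (M → E)) :
    Prop :=
  ∀ X Y Z : M → E, D X (fun p => ⟪Y p, Z p⟫) = fun p => ⟪Cov X Y p, Z p⟫ + ⟪Y p, Cov X Z p⟫

noncomputable def inducedCov (Cov : (M → E) → (M → E) → (M → E)) :
    (M → E) → (M → E) → (M → E) :=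
  fun X Y p => (T p).starProjection (Cov X Y p)

noncomputable def secondFundamentalForm (Cov : (M → E) → (M → E) → (M → E)) :
    (M → E) → (M → E) → (M → E) :=
  fun X Y p => Cov X Y p - (T p).starProjection (Cov X Y p)

def curvature (Cov Lb : (M → E) → (M → E) → (M → E)) (X Y Z : M → E) : M → E :=
  fun p => Cov X (Cov Y Z) p - Cov Y (Cov X Z) p - Cov (Lb X Y) Z p

variable {T} {Cov : (M → E) → (M → E) → (M → E)}

lemma inner_cov_cov_eq_inner_cov_inducedCov {D : (M → E) → (M → ℝ) → (M → ℝ)}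
    (hmetric : IsMetricConnection D Cov)
    (X Y Z W : M → E) (hW : ∀ p, W p ∈ T p) (p : M) :
    ⟪Cov X (Cov Y Z) p, W p⟫ = ⟪Cov X (inducedCov T Cov Y Z) p, W p⟫
      - ⟪secondFundamentalForm T Cov Y Z p, secondFundamentalForm T Cov X W p⟫ := by
  have hsame : (fun q => ⟪Cov Y Z q, W q⟫) = fun q => ⟪inducedCov T Cov Y Z q, W q⟫ :=
    funext fun q => (inner_starProjection_left_of_mem (hW q) _).symm
  have hD := congrFun (hmetric X (Cov Y Z) W) p
  rw [hsame, hmetric] at hD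
  have hII : ⟪secondFundamentalForm T Cov Y Z p, secondFundamentalForm T Cov X W p⟫
      = ⟪Cov Y Z p, Cov X W p⟫ - ⟪inducedCov T Cov Y Z p, Cov X W p⟫ := by
    rw [secondFundamentalForm, secondFundamentalForm, ← inner_sub_starProjection_left_eq,
      inner_sub_left, inducedCov]
  linarith

theorem inner_curvature_eq_inner_curvature_inducedCov {D : (M → E) → (M → ℝ) → (M → ℝ)}
    (hmetric : IsMetricConnection D Cov)
    (Lb : (M → E) → (M → E) → (M → E)) (X Y Z W : M → E) (hW : ∀ p, W p ∈ T p) (p : M) :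
    ⟪curvature Cov Lb X Y Z p, W p⟫ = ⟪curvature (inducedCov T Cov) Lb X Y Z p, W p⟫
      - ⟪secondFundamentalForm T Cov X W p, secondFundamentalForm T Cov Y Z p⟫
      + ⟪secondFundamentalForm T Cov X Z p, secondFundamentalForm T Cov Y W p⟫ := by
  have hXYZ := inner_cov_cov_eq_inner_cov_inducedCov hmetric X Y Z W hW p
  have hYXZ := inner_cov_cov_eq_inner_cov_inducedCov hmetric Y X Z W hW p
  simp only [curvature, inner_sub_left]
  simp only [inducedCov, inner_starProjection_left_of_mem (hW p)]
  rw [real_inner_comm (secondFundamentalForm T Cov Y Z p)]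
  linarith

lemma secondFundamentalForm_map_right {J : E →ₗ[ℝ] E} (hJ : ∀ v w, ⟪J v, w⟫ = -⟪v, J w⟫)
    (hJT : ∀ p, ∀ v ∈ T p, J v ∈ T p)
    (hCovJ : ∀ X Y : M → E, Cov X (fun p => J (Y p)) = fun p => J (Cov X Y p))
    (X Y : M → E) (p : M) :
    secondFundamentalForm T Cov X (fun q => J (Y q)) p = J (secondFundamentalForm T Cov X Y p) := by
  simp only [secondFundamentalForm, hCovJ, starProjection_map_of_skew hJ (hJT p), map_sub]

lemma secondFundamentalForm_comm_of_torsion_eq_zero (Lb : (M → E) → (M → E) → (M → E))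
    {X Y : M → E} {p : M} (htor : Cov X Y p - Cov Y X p - Lb X Y p = 0) (hLb : Lb X Y p ∈ T p) :
    secondFundamentalForm T Cov Y X p = secondFundamentalForm T Cov X Y p := by
  have hYX : Cov Y X p = Cov X Y p - Lb X Y p := by
    rw [sub_sub, sub_eq_zero] at htor
    rw [htor, add_sub_cancel_right]
  simp only [secondFundamentalForm, hYX, map_sub, starProjection_eq_self_iff.mpr hLb]
  abel

theorem inner_curvature_holomorphic_eq {D : (M → E) → (M → ℝ) → (M → ℝ)}
    (hmetric : IsMetricConnection D Cov)
    {J : E →ₗ[ℝ] E} (hJ2 : ∀ v, J (J v) = -v) (hJg : ∀ v w, ⟪J v, J w⟫ = ⟪v, w⟫)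
    (hJT : ∀ p, ∀ v ∈ T p, J v ∈ T p)
    (hCovJ : ∀ X Y : M → E, Cov X (fun p => J (Y p)) = fun p => J (Cov X Y p))
    (Lb : (M → E) → (M → E) → (M → E)) (X : M → E) (hX : ∀ p, X p ∈ T p) (p : M)
    (htor : Cov X (fun q => J (X q)) p - Cov (fun q => J (X q)) X p - Lb X (fun q => J (X q)) p = 0)
    (hLb : Lb X (fun q => J (X q)) p ∈ T p) :
    ⟪curvature Cov Lb X (fun q => J (X q)) (fun q => J (X q)) p, X p⟫
      = ⟪curvature (inducedCov T Cov) Lb X (fun q => J (X q)) (fun q => J (X q)) p, X p⟫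
        + 2 * ‖secondFundamentalForm T Cov X X p‖ ^ 2 := by
  have hskew := inner_map_left_eq_neg_of_sq_eq_neg hJ2 hJg
  have hXJX := secondFundamentalForm_map_right hskew hJT hCovJ X X p
  have hJXX := (secondFundamentalForm_comm_of_torsion_eq_zero Lb htor hLb).trans hXJX
  have hJXJX : secondFundamentalForm T Cov (fun q => J (X q)) (fun q => J (X q)) p
      = -secondFundamentalForm T Cov X X p := by
    rw [secondFundamentalForm_map_right hskew hJT hCovJ, hJXX, hJ2]
  rw [inner_curvature_eq_inner_curvature_inducedCov hmetric Lb _ _ _ X hX p, hJXJX, hXJX, hJXX,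
    hJg, inner_neg_right, real_inner_self_eq_norm_sq]
  ring

end Submanifold

/-- Abstract model of Corollary 4.5: for an embedded almost complex submanifold `S`
(with tangent spaces `T p`) of an almost Hermitian manifold with Chern connection
`Cov` and curvature `R(X,Y)Z = ∇_X∇_Y Z - ∇_Y∇_X Z - ∇_{[X,Y]}Z`, the holomorphic
sectional curvatures satisfy `H(X) = Ĥ(X) + 2|II(X,X)|²/|X|⁴`; in particular
`Ĥ(X) ≤ H(X)` with equality iff `II(X,X) = 0`. -/
theorem holomorphic_sectional_curvature_submanifold
    {M E : Type*} [NormedAddCommGroup E] [InnerProductSpace ℝ E]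
    (T : M → Submodule ℝ E) [∀ p, CompleteSpace (T p)]
    (J : E →ₗ[ℝ] E)
    (hJ2 : ∀ v : E, J (J v) = -v)
    (hJg : ∀ v w : E, (inner ℝ (J v) (J w) : ℝ) = inner ℝ v w)
    (hJT : ∀ (p : M), ∀ v ∈ T p, J v ∈ T p)
    (D : (M → E) → (M → ℝ) → (M → ℝ))
    (Cov : (M → E) → (M → E) → (M → E))
    (Lb : (M → E) → (M → E) → (M → E))
    (hmetric : ∀ X Y Z : M → E,
      D X (fun p => (inner ℝ (Y p) (Z p) : ℝ)) =
        fun p => (inner ℝ (Cov X Y p) (Z p) : ℝ) + (inner ℝ (Y p) (Cov X Z p) : ℝ))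
    (hCovJ : ∀ X Y : M → E, Cov X (fun p => J (Y p)) = fun p => J (Cov X Y p))
    (htor : ∀ (X : M → E) (p : M),
      Cov X (fun q => J (X q)) p - Cov (fun q => J (X q)) X p - Lb X (fun q => J (X q)) p = 0)
    (hLbT : ∀ X Y : M → E, (∀ p, X p ∈ T p) → (∀ p, Y p ∈ T p) → ∀ p, Lb X Y p ∈ T p)
    -- the induced (projected) Chern connection on `S`
    (CovT : (M → E) → (M → E) → (M → E))
    (hCovT : CovT = fun X Y => fun p => (Submodule.orthogonalProjectionOnto (T p) (Cov X Y p) : E))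
    -- the second fundamental form
    (II : (M → E) → (M → E) → (M → E))
    (hII : II = fun X Y => fun p => Cov X Y p - CovT X Y p)
    -- curvature tensors of `∇` and of the induced connection `∇̂`
    (R Rhat : (M → E) → (M → E) → (M → E) → (M → E))
    (hR : R = fun X Y Z => fun p =>
      Cov X (Cov Y Z) p - Cov Y (Cov X Z) p - Cov (Lb X Y) Z p)
    (hRhat : Rhat = fun X Y Z => fun p =>
      CovT X (CovT Y Z) p - CovT Y (CovT X Z) p - CovT (Lb X Y) Z p)
    (X : M → E) (hX : ∀ p, X p ∈ T p) (p : M) (hXp : X p ≠ 0) :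
    (inner ℝ (R X (fun q => J (X q)) (fun q => J (X q)) p) (X p) : ℝ) / ‖X p‖ ^ 4 =
        (inner ℝ (Rhat X (fun q => J (X q)) (fun q => J (X q)) p) (X p) : ℝ) / ‖X p‖ ^ 4
          + 2 * ‖II X X p‖ ^ 2 / ‖X p‖ ^ 4 ∧
      (inner ℝ (Rhat X (fun q => J (X q)) (fun q => J (X q)) p) (X p) : ℝ) / ‖X p‖ ^ 4 ≤
        (inner ℝ (R X (fun q => J (X q)) (fun q => J (X q)) p) (X p) : ℝ) / ‖X p‖ ^ 4 ∧
      ((inner ℝ (Rhat X (fun q => J (X q)) (fun q => J (X q)) p) (X p) : ℝ) / ‖X p‖ ^ 4 =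
        (inner ℝ (R X (fun q => J (X q)) (fun q => J (X q)) p) (X p) : ℝ) / ‖X p‖ ^ 4 ↔
          II X X p = 0) := by
  have hkey : ⟪R X (fun q => J (X q)) (fun q => J (X q)) p, X p⟫
      = ⟪Rhat X (fun q => J (X q)) (fun q => J (X q)) p, X p⟫ + 2 * ‖II X X p‖ ^ 2 := by
    subst hCovT hII hR hRhat
    exact inner_curvature_holomorphic_eq hmetric hJ2 hJg hJT hCovJ Lb X hX p (htor X p)
      (hLbT X _ hX (fun q => hJT q _ (hX q)) p)
  have hX4 : 0 < ‖X p‖ ^ 4 := pow_pos (norm_pos_iff.mpr hXp) 4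
  refine ⟨by rw [hkey, add_div], ?_, ?_⟩
  · rw [hkey]
    gcongr
    exact le_add_of_nonneg_right (by positivity)
  · rw [div_left_inj' hX4.ne', hkey]
    simp
end

section
/- Let D ⊆ ℂ be open and connected, u, v : D → ℝ smooth with u > 0, v ≥ 0, and suppose the conformal metrics u² dz dz̄ and v² dz dz̄ at a point z₀ where v(z₀) > 0 have Gaussian curvatures satisfying K_u(z₀) = -4 u(z₀)^{-2} ∂²(log u)/∂z∂z̄(z₀) ≥ K₁ and K_v(z₀) = -4 v(z₀)^{-2} ∂²(log v)/∂z∂z̄(z₀) ≤ K₂ with K₁ ≤ 0 < -K₂. If the function log(v/u) has a local maximum at z₀, then (v(z₀)/u(z₀))² ≤ K₁/K₂. -/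
open Filter Set Topology

/-- The operator `∂²/∂z∂z̄` acting on real-valued functions on `ℂ`,
i.e. one quarter of the Laplacian: `∂²f/∂z∂z̄ = (f_xx + f_yy)/4`. -/
noncomputable def dzdzbar (f : ℂ → ℝ) (z : ℂ) : ℝ :=
  (1 / 4) * (iteratedFDeriv ℝ 2 f z ![1, 1]
    + iteratedFDeriv ℝ 2 f z ![Complex.I, Complex.I])



/-- Second derivative test: at an interior local maximum of a C² function, the
second derivative in any direction is nonpositive. -/
lemma second_deriv_test {g : ℂ → ℝ} {z₀ : ℂ} (hg : ContDiffAt ℝ 2 g z₀)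
    (hmax : IsLocalMax g z₀) (w : ℂ) :
    fderiv ℝ (fderiv ℝ g) z₀ w w ≤ 0 := by
  by_contra hc
  push_neg at hc
  set L : ℝ → ℂ := fun t => z₀ + t • w with hLdef
  have hLt : ∀ t : ℝ, HasDerivAt L w t := fun t => by
    simpa [hLdef] using ((hasDerivAt_id t).smul_const w).const_add z₀
  have hL0 : L 0 = z₀ := by simp [hLdef]
  have hLtends : Tendsto L (𝓝 0) (𝓝 z₀) := by
    rw [← hL0]; exact ((hLt 0).continuousAt)
  set ψ : ℝ → ℝ := fun t => fderiv ℝ g (L t) w with hψdef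
  set φ : ℝ → ℝ := fun t => g (L t) with hφdef
  have hdiff : ∀ᶠ x in 𝓝 z₀, DifferentiableAt ℝ g x :=
    (hg.eventually (by norm_num)).mono fun x hx => hx.differentiableAt (by norm_num)
  have hA : ∀ᶠ t in 𝓝 (0 : ℝ), HasDerivAt φ (ψ t) t := by
    filter_upwards [hLtends.eventually hdiff] with t ht
    exact ht.hasFDerivAt.comp_hasDerivAt t (hLt t)
  have hφmax : IsLocalMax φ 0 := by
    have h := hLtends.eventually hmax
    exact h.mono fun t ht => by simpa [hφdef, hL0] using ht
  have hψ0 : ψ 0 = 0 := hφmax.hasDerivAt_eq_zero hA.self_of_nhds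
  have h1 : DifferentiableAt ℝ (fderiv ℝ g) z₀ :=
    (hg.fderiv_right (m := 1) (by norm_num)).differentiableAt (by norm_num)
  have h2 : HasFDerivAt (fderiv ℝ g) (fderiv ℝ (fderiv ℝ g) z₀) (L 0) :=
    hL0 ▸ h1.hasFDerivAt
  have h3 : HasDerivAt (fun t => fderiv ℝ g (L t)) (fderiv ℝ (fderiv ℝ g) z₀ w) 0 :=
    h2.comp_hasDerivAt 0 (hLt 0)
  have hψderiv : HasDerivAt ψ (fderiv ℝ (fderiv ℝ g) z₀ w w) 0 := by
    have h4 := h3.clm_apply (hasDerivAt_const 0 w)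
    simpa [hψdef, hL0] using h4
  have hslope := hasDerivAt_iff_tendsto_slope.mp hψderiv
  have hpos : ∀ᶠ t in 𝓝[≠] (0 : ℝ), 0 < slope ψ 0 t := hslope.eventually (eventually_gt_nhds hc)
  rw [eventually_nhdsWithin_iff] at hpos
  have hloc : ∀ᶠ t in 𝓝 (0 : ℝ),
      HasDerivAt φ (ψ t) t ∧ (t ∈ ({0}ᶜ : Set ℝ) → 0 < slope ψ 0 t) ∧ φ t ≤ φ 0 :=
    hA.and (hpos.and hφmax)
  obtain ⟨ε, hε, hball⟩ := Metric.eventually_nhds_iff_ball.mp hloc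
  have hsub : Icc (0 : ℝ) (ε / 2) ⊆ Metric.ball 0 ε := fun t ht => by
    rw [Metric.mem_ball, Real.dist_eq, sub_zero, abs_of_nonneg ht.1]
    linarith [ht.2]
  have hmono : StrictMonoOn φ (Icc 0 (ε / 2)) := by
    apply strictMonoOn_of_deriv_pos (convex_Icc _ _)
    · exact fun t ht => ((hball t (hsub ht)).1.differentiableAt.continuousAt).continuousWithinAt
    · intro t ht
      rw [interior_Icc] at ht
      have h5 := hball t (hsub ⟨ht.1.le, ht.2.le⟩)
      rw [h5.1.deriv]
      have h6 := h5.2.1 (by simpa using ne_of_gt ht.1)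
      rw [slope_def_field, hψ0, sub_zero, sub_zero] at h6
      have := mul_pos h6 ht.1
      rwa [div_mul_cancel₀ _ (ne_of_gt ht.1)] at this
  have hlt : φ 0 < φ (ε / 2) :=
    hmono (left_mem_Icc.2 (by linarith)) (right_mem_Icc.2 (by linarith)) (by linarith)
  have hle : φ (ε / 2) ≤ φ 0 :=
    (hball _ (hsub (right_mem_Icc.2 (by linarith)))).2.2
  linarith

/-- At an interior local maximum of a C² function, `dzdzbar` is nonpositive. -/
lemma dzdzbar_nonpos {g : ℂ → ℝ} {z₀ : ℂ} (hg : ContDiffAt ℝ 2 g z₀)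
    (hmax : IsLocalMax g z₀) : dzdzbar g z₀ ≤ 0 := by
  have h1 := second_deriv_test hg hmax 1
  have h2 := second_deriv_test hg hmax Complex.I
  rw [dzdzbar, iteratedFDeriv_two_apply, iteratedFDeriv_two_apply]
  simp only [Matrix.cons_val_zero, Matrix.cons_val_one, Matrix.head_cons]
  linarith

/-- Two-dimensional core of the Ahlfors–Schwarz comparison: at an interior local
maximum of `log(v/u)`, the curvature bounds force `(v/u)² ≤ K₁/K₂`. -/
theorem ahlfors_schwarz_two_dim (D : Set ℂ) (hD : IsOpen D) (hDc : IsConnected D)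
    (u v : ℂ → ℝ) (hu : ContDiffOn ℝ (⊤ : ℕ∞) u D) (hv : ContDiffOn ℝ (⊤ : ℕ∞) v D)
    (hupos : ∀ z ∈ D, 0 < u z) (hvnonneg : ∀ z ∈ D, 0 ≤ v z)
    (z₀ : ℂ) (hz₀ : z₀ ∈ D) (hv₀ : 0 < v z₀)
    (K₁ K₂ : ℝ) (hK₁ : K₁ ≤ 0) (hK₂ : K₂ < 0)
    (hKu : K₁ ≤ -4 * (u z₀) ^ (-2 : ℤ) * dzdzbar (fun z => Real.log (u z)) z₀)
    (hKv : -4 * (v z₀) ^ (-2 : ℤ) * dzdzbar (fun z => Real.log (v z)) z₀ ≤ K₂)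
    (hmax : IsLocalMaxOn (fun z => Real.log (v z / u z)) D z₀) :
    (v z₀ / u z₀) ^ 2 ≤ K₁ / K₂ := by
  -- the open set where `v > 0` inside `D`
  set s : Set ℂ := D ∩ v ⁻¹' Set.Ioi 0 with hsdef
  have hsopen : IsOpen s := hv.continuousOn.isOpen_inter_preimage hD isOpen_Ioi
  have hz₀s : z₀ ∈ s := ⟨hz₀, hv₀⟩
  have hsD : s ⊆ D := Set.inter_subset_left
  have hsnhds : s ∈ 𝓝 z₀ := hsopen.mem_nhds hz₀s
  have hvpos : ∀ z ∈ s, 0 < v z := fun z hz => hz.2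
  have hupos' : ∀ z ∈ s, 0 < u z := fun z hz => hupos z hz.1
  -- smoothness of log u, log v on s
  have hlogv : ContDiffOn ℝ 2 (fun z => Real.log (v z)) s :=
    ((hv.mono hsD).log fun z hz => (hvpos z hz).ne').of_le (WithTop.coe_le_coe.mpr le_top)
  have hlogu : ContDiffOn ℝ 2 (fun z => Real.log (u z)) s :=
    ((hu.mono hsD).log fun z hz => (hupos' z hz).ne').of_le (WithTop.coe_le_coe.mpr le_top)
  set g : ℂ → ℝ := fun z => Real.log (v z) + -Real.log (u z) with hgdef
  have hgs : ContDiffOn ℝ 2 g s := hlogv.add hlogu.neg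
  have hgAt : ContDiffAt ℝ 2 g z₀ := hgs.contDiffAt hsnhds
  -- local maximum of g at z₀
  have hmax' : IsLocalMax (fun z => Real.log (v z / u z)) z₀ := by
    have : 𝓝[D] z₀ = 𝓝 z₀ := nhdsWithin_eq_nhds.2 (hD.mem_nhds hz₀)
    unfold IsLocalMaxOn IsMaxFilter at hmax
    rwa [this] at hmax
  have hgmax : IsLocalMax g z₀ := by
    have heq : ∀ᶠ z in 𝓝 z₀, Real.log (v z / u z) = g z := by
      filter_upwards [hsnhds] with z hz
      rw [hgdef]
      simp only []
      rw [Real.log_div (hvpos z hz).ne' (hupos' z hz).ne']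
      ring
    exact hmax'.congr heq
  have hgnonpos : dzdzbar g z₀ ≤ 0 := dzdzbar_nonpos hgAt hgmax
  -- linearity of dzdzbar at z₀
  have hsplit : ∀ m : Fin 2 → ℂ, iteratedFDeriv ℝ 2 g z₀ m =
      iteratedFDeriv ℝ 2 (fun z => Real.log (v z)) z₀ m
        - iteratedFDeriv ℝ 2 (fun z => Real.log (u z)) z₀ m := by
    intro m
    have h1 : iteratedFDerivWithin ℝ 2 g s z₀ =
        iteratedFDerivWithin ℝ 2 (fun z => Real.log (v z)) s z₀
          + iteratedFDerivWithin ℝ 2 (fun z => -Real.log (u z)) s z₀ :=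
      iteratedFDerivWithin_add_apply' (hlogv z₀ hz₀s) (hlogu.neg z₀ hz₀s) hsopen.uniqueDiffOn hz₀s
    have h2 : iteratedFDerivWithin ℝ 2 (fun z => -Real.log (u z)) s z₀ =
        -iteratedFDerivWithin ℝ 2 (fun z => Real.log (u z)) s z₀ :=
      iteratedFDerivWithin_neg_apply hsopen.uniqueDiffOn hz₀s
    have e1 := iteratedFDerivWithin_of_isOpen (𝕜 := ℝ) (f := g) 2 hsopen hz₀s
    have e2 := iteratedFDerivWithin_of_isOpen (𝕜 := ℝ) (f := fun z => Real.log (v z)) 2 hsopen hz₀s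
    have e3 := iteratedFDerivWithin_of_isOpen (𝕜 := ℝ) (f := fun z => Real.log (u z)) 2 hsopen hz₀s
    rw [← e1, ← e2, ← e3, h1, h2]
    simp [sub_eq_add_neg]
  have hlin : dzdzbar g z₀ = dzdzbar (fun z => Real.log (v z)) z₀
      - dzdzbar (fun z => Real.log (u z)) z₀ := by
    simp only [dzdzbar, hsplit]
    ring
  -- put things together
  set A := dzdzbar (fun z => Real.log (u z)) z₀
  set B := dzdzbar (fun z => Real.log (v z)) z₀
  have hu₀ : 0 < u z₀ := hupos z₀ hz₀
  have hu2 : 0 < u z₀ ^ 2 := pow_pos hu₀ 2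
  have hv2 : 0 < v z₀ ^ 2 := pow_pos hv₀ 2
  have hzu : (u z₀ : ℝ) ^ (-2 : ℤ) = (u z₀ ^ 2)⁻¹ := by
    rw [zpow_neg]; norm_cast
  have hzv : (v z₀ : ℝ) ^ (-2 : ℤ) = (v z₀ ^ 2)⁻¹ := by
    rw [zpow_neg]; norm_cast
  rw [hzu] at hKu
  rw [hzv] at hKv
  have hBA : B ≤ A := by
    have := hgnonpos
    rw [hlin] at this
    linarith
  -- K₁ * u² ≤ -4A and -4B ≤ K₂ * v²
  have hKu' : K₁ * u z₀ ^ 2 ≤ -4 * A := by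
    have h := mul_le_mul_of_nonneg_right hKu hu2.le
    calc K₁ * u z₀ ^ 2 ≤ -4 * (u z₀ ^ 2)⁻¹ * A * u z₀ ^ 2 := h
      _ = -4 * A := by field_simp
  have hKv' : -4 * B ≤ K₂ * v z₀ ^ 2 := by
    have h := mul_le_mul_of_nonneg_right hKv hv2.le
    calc -4 * B = -4 * (v z₀ ^ 2)⁻¹ * B * v z₀ ^ 2 := by field_simp
      _ ≤ K₂ * v z₀ ^ 2 := h
  have hkey : K₁ * u z₀ ^ 2 ≤ K₂ * v z₀ ^ 2 := by linarith
  have h2 : K₁ ≤ (v z₀ / u z₀) ^ 2 * K₂ := by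
    rw [div_pow, div_mul_eq_mul_div, le_div_iff₀ hu2]
    linarith
  exact (le_div_iff_of_neg hK₂).2 h2
end
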